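/- Let $X, Z, W$ be mutually independent square-integrable random variables and $g(X,Z,W)$ square-integrable. Then $\mathrm{Var}[\mathbb{E}[g \mid X, Z]] - \mathrm{Var}[\mathbb{E}[g \mid X]] \leq \mathbb{E}[\mathrm{Var}[g \mid X, W]]$, where $\mathbb{E}[\mathrm{Var}[g \mid X, W]] = \mathrm{Var}[g] - \mathrm{Var}[\mathbb{E}[g \mid X, W]]$ is the total-effect variance of $Z$. -/

import Mathlib

open MeasureTheory ProbabilityTheory

section Aux

variable {Ω : Type*} {m m0 : MeasurableSpace Ω} {μ : Measure Ω}

private lemma aux_integrable_mul {f g : Ω → ℝ} (hf : MemLp f 2 μ) (hg : MemLp g 2 μ) :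
    Integrable (fun ω => f ω * g ω) μ := by
  have h : MemLp (f • g) 1 μ := hg.smul hf
  exact memLp_one_iff_integrable.mp h

private lemma variance_congr_ae {f g : Ω → ℝ} (h : f =ᵐ[μ] g) :
    variance f μ = variance g μ := by
  unfold ProbabilityTheory.variance ProbabilityTheory.evariance
  rw [integral_congr_ae h, lintegral_congr_ae (h.mono fun x hx => by rw [hx])]

private lemma memℒp_two_condexp [IsProbabilityMeasure μ] (hm : m ≤ m0) {f : Ω → ℝ}
    (hf : MemLp f 2 μ) : MemLp (μ[f|m]) 2 μ := by
  haveI : IsFiniteMeasure (μ.trim hm) := isFiniteMeasure_trim hm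
  set fL : Lp ℝ 2 μ := hf.toLp f with hfL
  have heq : ((condExpL2 ℝ ℝ hm fL : Lp ℝ 2 μ) : Ω → ℝ) =ᵐ[μ] μ[f|m] := by
    refine ae_eq_condExp_of_forall_setIntegral_eq hm (hf.integrable one_le_two) ?_ ?_ ?_
    · intro s _ _
      exact integrableOn_condExpL2_of_measure_ne_top hm (measure_ne_top μ s) fL
    · intro s hs hμs
      rw [integral_condExpL2_eq hm fL hs hμs.ne]
      exact integral_congr_ae (ae_restrict_of_ae (hf.coeFn_toLp))
    · exact aestronglyMeasurable_condExpL2 hm fL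
  exact (Lp.memLp _).ae_eq heq

private lemma integral_mul_condexp [IsProbabilityMeasure μ] (hm : m ≤ m0) {f : Ω → ℝ}
    (hf : MemLp f 2 μ) :
    ∫ ω, f ω * (μ[f|m]) ω ∂μ = ∫ ω, ((μ[f|m]) ω) ^ 2 ∂μ := by
  haveI : IsFiniteMeasure (μ.trim hm) := isFiniteMeasure_trim hm
  set h := μ[f|m] with hh
  have hh2 : MemLp h 2 μ := memℒp_two_condexp hm hf
  have hmulint : Integrable (h * f) μ := aux_integrable_mul hh2 hf
  have hpull : μ[h * f|m] =ᵐ[μ] h * μ[f|m] :=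
    condExp_mul_of_stronglyMeasurable_left stronglyMeasurable_condExp hmulint (hf.integrable one_le_two)
  calc ∫ ω, f ω * h ω ∂μ = ∫ ω, (h * f) ω ∂μ :=
        integral_congr_ae (ae_of_all _ fun ω => by simp [mul_comm])
    _ = ∫ ω, (μ[h * f|m]) ω ∂μ := (integral_condExp hm).symm
    _ = ∫ ω, (h * μ[f|m]) ω ∂μ := integral_congr_ae hpull
    _ = ∫ ω, (h ω) ^ 2 ∂μ :=
        integral_congr_ae (ae_of_all _ fun ω => by simp [← hh, sq])

private lemma integral_sq_sub_condexp [IsProbabilityMeasure μ] (hm : m ≤ m0) {f : Ω → ℝ}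
    (hf : MemLp f 2 μ) :
    ∫ ω, (f ω - (μ[f|m]) ω) ^ 2 ∂μ
      = ∫ ω, (f ω) ^ 2 ∂μ - ∫ ω, ((μ[f|m]) ω) ^ 2 ∂μ := by
  haveI : IsFiniteMeasure (μ.trim hm) := isFiniteMeasure_trim hm
  set h := μ[f|m] with hh
  have hh2 : MemLp h 2 μ := memℒp_two_condexp hm hf
  have hf2 : Integrable (fun ω => f ω ^ 2) μ := hf.integrable_sq
  have hhsq : Integrable (fun ω => h ω ^ 2) μ := hh2.integrable_sq
  have hfh : Integrable (fun ω => f ω * h ω) μ := aux_integrable_mul hf hh2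
  have key : ∫ ω, f ω * h ω ∂μ = ∫ ω, h ω ^ 2 ∂μ := integral_mul_condexp hm hf
  have hexp : (fun ω => (f ω - h ω) ^ 2)
      = fun ω => f ω ^ 2 - (2 * (f ω * h ω) - h ω ^ 2) := by
    funext ω; ring
  have hconst : Integrable (fun ω => 2 * (f ω * h ω)) μ := hfh.const_mul 2
  have h2i : Integrable (fun ω => 2 * (f ω * h ω) - h ω ^ 2) μ := hconst.sub hhsq
  have hmul2 : ∫ ω, 2 * (f ω * h ω) ∂μ = 2 * ∫ ω, f ω * h ω ∂μ := by
    simpa [smul_eq_mul] using integral_smul (2 : ℝ) (fun ω => f ω * h ω)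
  rw [hexp, integral_sub hf2 h2i, integral_sub hconst hhsq, hmul2, key]
  ring

private lemma integral_sq_condexp_le [IsProbabilityMeasure μ] (hm : m ≤ m0) {f : Ω → ℝ}
    (hf : MemLp f 2 μ) :
    ∫ ω, ((μ[f|m]) ω) ^ 2 ∂μ ≤ ∫ ω, (f ω) ^ 2 ∂μ := by
  have h := integral_sq_sub_condexp hm hf
  have hnn : 0 ≤ ∫ ω, (f ω - (μ[f|m]) ω) ^ 2 ∂μ :=
    integral_nonneg fun ω => sq_nonneg _
  linarith

private lemma variance_sub_condexp [IsProbabilityMeasure μ] (hm : m ≤ m0) {f : Ω → ℝ}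
    (hf : MemLp f 2 μ) :
    variance f μ - variance (μ[f|m]) μ = ∫ ω, (f ω - (μ[f|m]) ω) ^ 2 ∂μ := by
  haveI : IsFiniteMeasure (μ.trim hm) := isFiniteMeasure_trim hm
  set h := μ[f|m] with hh
  have hh2 : MemLp h 2 μ := memℒp_two_condexp hm hf
  have hmean : ∫ ω, h ω ∂μ = ∫ ω, f ω ∂μ := integral_condExp hm
  rw [variance_eq_sub hf, variance_eq_sub hh2, integral_sq_sub_condexp hm hf]
  simp only [Pi.pow_apply]
  rw [hmean]
  ring

/-- If `v` is measurable w.r.t. `σ(Z)`, `u` is `mF`-measurable and integrable, and `σ(Z)` is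
independent of `mF`, then the set integral over an intersection factorizes. -/
private lemma setIntegral_inter_indep [IsProbabilityMeasure μ]
    (hFle : m ≤ m0) {Z : Ω → ℝ} (hZ : Measurable[m0] Z)
    (hind : Indep (MeasurableSpace.comap Z inferInstance) m μ)
    {u : Ω → ℝ} (hu : Measurable[m] u) (hui : Integrable u μ)
    {A : Set Ω} (hA : MeasurableSet[m] A) {B : Set ℝ} (hB : MeasurableSet B) :
    ∫ x in A ∩ Z ⁻¹' B, u x ∂μ = (∫ x in A, u x ∂μ) * (μ (Z ⁻¹' B)).toReal := by
  set v : Ω → ℝ := (Z ⁻¹' B).indicator (fun _ => (1 : ℝ)) with hv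
  set w : Ω → ℝ := A.indicator u with hw
  have hZself : Measurable[MeasurableSpace.comap Z inferInstance] Z :=
    Measurable.of_comap_le le_rfl
  have hvmeas : Measurable[MeasurableSpace.comap Z inferInstance] v :=
    ((measurable_const).indicator hB).comp hZself
  have hwmeas : Measurable[m] w := hu.indicator hA
  have hIF : IndepFun w v μ := by
    have h1 : Indep (MeasurableSpace.comap Z inferInstance)
        (MeasurableSpace.comap w inferInstance) μ :=
      indep_of_indep_of_le_right hind (measurable_iff_comap_le.1 hwmeas)
    have h2 : Indep (MeasurableSpace.comap v inferInstance)
        (MeasurableSpace.comap w inferInstance) μ :=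
      indep_of_indep_of_le_left h1 (measurable_iff_comap_le.1 hvmeas)
    exact h2.symm
  have hvint : Integrable v μ := (integrable_const (1 : ℝ)).indicator (hZ hB)
  have hwint : Integrable w μ := hui.indicator (hFle _ hA)
  have hprod := hIF.integral_mul_eq_mul_integral hwint.aestronglyMeasurable hvint.aestronglyMeasurable
  have hptwise : w * v = (A ∩ Z ⁻¹' B).indicator u := by
    funext ω
    by_cases h1 : ω ∈ A <;> by_cases h2 : ω ∈ Z ⁻¹' B <;>
      simp [hw, hv, Set.indicator_apply, h1, h2]
  rw [← integral_indicator ((hFle _ hA).inter (hZ hB)), ← hptwise, hprod,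
    ← integral_indicator (hFle _ hA)]
  congr 1
  rw [hv, integral_indicator_const (1 : ℝ) (hZ hB)]
  simp [Measure.real]

/-- The key conditional-independence step: if `H` is `σ(X,W)`-measurable and `Z` is independent
of `(X,W)`, then conditioning `H` on `σ(X,Z)` is the same as conditioning on `σ(X)`. -/
private lemma condexp_drop [IsProbabilityMeasure μ]
    {X Z W : Ω → ℝ} (hX : Measurable X) (hZ : Measurable Z) (hW : Measurable W)
    (hind : Indep (MeasurableSpace.comap Z inferInstance)
      (MeasurableSpace.comap (fun ω => (X ω, W ω)) inferInstance) μ)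
    {H : Ω → ℝ}
    (hHmeas : StronglyMeasurable[MeasurableSpace.comap (fun ω => (X ω, W ω)) inferInstance] H)
    (hHint : Integrable H μ) :
    μ[H | MeasurableSpace.comap (fun ω => (X ω, Z ω)) inferInstance]
      =ᵐ[μ] μ[H | MeasurableSpace.comap X inferInstance] := by
  set m1 : MeasurableSpace Ω := MeasurableSpace.comap X inferInstance with hm1def
  set mXZ : MeasurableSpace Ω :=
    MeasurableSpace.comap (fun ω => (X ω, Z ω)) inferInstance with hmXZdef
  set mXW : MeasurableSpace Ω :=
    MeasurableSpace.comap (fun ω => (X ω, W ω)) inferInstance with hmXWdef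
  letI : MeasurableSpace Ω := m0
  have hm1 : m1 ≤ m0 := hX.comap_le
  have hmXZ : mXZ ≤ m0 := (hX.prodMk hZ).comap_le
  have hmXW : mXW ≤ m0 := (hX.prodMk hW).comap_le
  haveI : IsFiniteMeasure (μ.trim hmXZ) := isFiniteMeasure_trim hmXZ
  haveI : IsFiniteMeasure (μ.trim hm1) := isFiniteMeasure_trim hm1
  have h1leXW : m1 ≤ mXW := by
    have : X = (fun p : ℝ × ℝ => p.1) ∘ (fun ω => (X ω, W ω)) := rfl
    rw [hm1def, this, ← MeasurableSpace.comap_comp]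
    exact MeasurableSpace.comap_mono measurable_fst.comap_le
  have h1leXZ : m1 ≤ mXZ := by
    rw [hm1def, show X = (fun p : ℝ × ℝ => p.1) ∘ (fun ω => (X ω, Z ω)) from rfl,
      ← MeasurableSpace.comap_comp]
    exact MeasurableSpace.comap_mono measurable_fst.comap_le
  set g1 : Ω → ℝ := μ[H | m1] with hg1
  have hg1meas : Measurable[mXW] g1 :=
    ((stronglyMeasurable_condExp (f := H) (m := m1)).mono h1leXW).measurable
  have hg1int : Integrable g1 μ := integrable_condExp
  -- the set-integral property on all of mXZ
  have hset : ∀ s : Set Ω, MeasurableSet[mXZ] s → ∫ x in s, g1 x ∂μ = ∫ x in s, H x ∂μ := by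
    have hgen : mXZ = MeasurableSpace.generateFrom
        (Set.preimage (fun ω => (X ω, Z ω)) ''
          (Set.image2 (· ×ˢ ·) { s : Set ℝ | MeasurableSet s } { t : Set ℝ | MeasurableSet t })) := by
      rw [hmXZdef, ← generateFrom_prod, MeasurableSpace.comap_generateFrom]
    have hpi : IsPiSystem
        (Set.preimage (fun ω => (X ω, Z ω)) ''
          (Set.image2 (· ×ˢ ·) { s : Set ℝ | MeasurableSet s } { t : Set ℝ | MeasurableSet t })) :=
      (isPiSystem_prod (α := ℝ) (β := ℝ)).comap (fun ω => (X ω, Z ω))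
    intro s hs
    refine MeasurableSpace.induction_on_inter (m := mXZ)
      (C := fun t _ => ∫ x in t, g1 x ∂μ = ∫ x in t, H x ∂μ) hgen hpi ?_ ?_ ?_ ?_ s hs
    · simp
    · rintro t ⟨r, ⟨A, hA, B, hB, rfl⟩, rfl⟩
      have hteq : (fun ω => (X ω, Z ω)) ⁻¹' (A ×ˢ B) = X ⁻¹' A ∩ Z ⁻¹' B := by
        ext ω; simp [Set.mem_prod]
      rw [hteq]
      have hAm1 : MeasurableSet[m1] (X ⁻¹' A) := ⟨A, hA, rfl⟩
      have hAmXW : MeasurableSet[mXW] (X ⁻¹' A) := h1leXW _ hAm1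
      rw [setIntegral_inter_indep hmXW hZ hind hg1meas hg1int hAmXW hB,
        setIntegral_inter_indep hmXW hZ hind hHmeas.measurable hHint hAmXW hB,
        setIntegral_condExp hm1 hHint hAm1]
    · intro t htm ht
      have htm0 : MeasurableSet[m0] t := hmXZ _ htm
      have h1 : ∫ x in t, g1 x ∂μ + ∫ x in tᶜ, g1 x ∂μ = ∫ x, g1 x ∂μ :=
        integral_add_compl htm0 hg1int
      have h2 : ∫ x in t, H x ∂μ + ∫ x in tᶜ, H x ∂μ = ∫ x, H x ∂μ :=
        integral_add_compl htm0 hHint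
      have htot : ∫ x, g1 x ∂μ = ∫ x, H x ∂μ := integral_condExp hm1
      linarith
    · intro f hdisj hfm hf
      have hfm0 : ∀ i, MeasurableSet[m0] (f i) := fun i => hmXZ _ (hfm i)
      rw [integral_iUnion hfm0 hdisj hg1int.integrableOn,
        integral_iUnion hfm0 hdisj hHint.integrableOn]
      exact tsum_congr hf
  refine (ae_eq_condExp_of_forall_setIntegral_eq hmXZ hHint
    (fun s _ _ => hg1int.integrableOn) (fun s hs _ => hset s hs) ?_).symm
  exact ((stronglyMeasurable_condExp (f := H) (m := m1)).mono
    h1leXZ).aestronglyMeasurable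

end Aux

/-- For mutually independent square-integrable `X, Z, W` and square-integrable
`g(X,Z,W)`, the variance increment from adding `Z` to the conditioning set `{X}` is
dominated by the total-effect variance of `Z`:
`Var[E[g|X,Z]] - Var[E[g|X]] ≤ E[Var[g|X,W]] = Var[g] - Var[E[g|X,W]]`. -/
theorem variance_increment_le_total_effect
    {Ω : Type*} [MeasurableSpace Ω] (μ : Measure Ω) [IsProbabilityMeasure μ]
    (X Z W : Ω → ℝ) (hX : Measurable X) (hZ : Measurable Z) (hW : Measurable W)
    (hX2 : MemLp X 2 μ) (hZ2 : MemLp Z 2 μ) (hW2 : MemLp W 2 μ)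
    (hIndep1 : IndepFun X (fun ω => (Z ω, W ω)) μ)
    (hIndep2 : IndepFun Z (fun ω => (X ω, W ω)) μ)
    (hIndep3 : IndepFun W (fun ω => (X ω, Z ω)) μ)
    (g : ℝ → ℝ → ℝ → ℝ) (hg : Measurable fun p : ℝ × ℝ × ℝ => g p.1 p.2.1 p.2.2)
    (G : Ω → ℝ) (hGdef : G = fun ω => g (X ω) (Z ω) (W ω)) (hG2 : MemLp G 2 μ) :
    variance (μ[G | MeasurableSpace.comap (fun ω => (X ω, Z ω)) inferInstance]) μ -
        variance (μ[G | MeasurableSpace.comap X inferInstance]) μ ≤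
      variance G μ -
        variance (μ[G | MeasurableSpace.comap (fun ω => (X ω, W ω)) inferInstance]) μ := by
  letI mΩ : MeasurableSpace Ω := ‹MeasurableSpace Ω›
  have hm1 : MeasurableSpace.comap X inferInstance ≤ mΩ := hX.comap_le
  have hmXZ : MeasurableSpace.comap (fun ω => (X ω, Z ω)) inferInstance
      ≤ mΩ := (hX.prodMk hZ).comap_le
  have hmXW : MeasurableSpace.comap (fun ω => (X ω, W ω)) inferInstance
      ≤ mΩ := (hX.prodMk hW).comap_le
  set m1 : MeasurableSpace Ω := MeasurableSpace.comap X inferInstance with hm1def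
  set mXZ : MeasurableSpace Ω :=
    MeasurableSpace.comap (fun ω => (X ω, Z ω)) inferInstance with hmXZdef
  set mXW : MeasurableSpace Ω :=
    MeasurableSpace.comap (fun ω => (X ω, W ω)) inferInstance with hmXWdef
  letI : MeasurableSpace Ω := mΩ
  haveI : IsFiniteMeasure (μ.trim hm1) := isFiniteMeasure_trim hm1
  haveI : IsFiniteMeasure (μ.trim hmXZ) := isFiniteMeasure_trim hmXZ
  haveI : IsFiniteMeasure (μ.trim hmXW) := isFiniteMeasure_trim hmXW
  have h1leXZ : m1 ≤ mXZ := by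
    rw [hm1def, show X = (fun p : ℝ × ℝ => p.1) ∘ (fun ω => (X ω, Z ω)) from rfl,
      ← MeasurableSpace.comap_comp]
    exact MeasurableSpace.comap_mono measurable_fst.comap_le
  have h1leXW : m1 ≤ mXW := by
    rw [hm1def, show X = (fun p : ℝ × ℝ => p.1) ∘ (fun ω => (X ω, W ω)) from rfl,
      ← MeasurableSpace.comap_comp]
    exact MeasurableSpace.comap_mono measurable_fst.comap_le
  set E1 : Ω → ℝ := μ[G | m1] with hE1
  set E12 : Ω → ℝ := μ[G | mXZ] with hE12
  set E13 : Ω → ℝ := μ[G | mXW] with hE13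
  have hE12mem : MemLp E12 2 μ := memℒp_two_condexp hmXZ hG2
  have hE13mem : MemLp E13 2 μ := memℒp_two_condexp hmXW hG2
  -- Step 1: LHS = ∫ (E12 - E1)²
  have hcc : μ[E12 | m1] =ᵐ[μ] E1 := condExp_condExp_of_le h1leXZ hmXZ
  have step1 : variance E12 μ - variance E1 μ = ∫ ω, (E12 ω - E1 ω) ^ 2 ∂μ := by
    rw [← variance_congr_ae hcc, variance_sub_condexp hm1 hE12mem]
    refine integral_congr_ae (hcc.mono fun ω hω => by simp only [hω])
  -- Step 2: rewrite E12 - E1 as a conditional expectation of D = G - E13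
  set D : Ω → ℝ := fun ω => G ω - E13 ω with hD
  have hD2 : MemLp D 2 μ := hG2.sub hE13mem
  have hindZ : Indep (MeasurableSpace.comap Z inferInstance) mXW μ := hIndep2
  have hdrop : μ[E13 | mXZ] =ᵐ[μ] μ[E13 | m1] :=
    condexp_drop hX hZ hW hindZ stronglyMeasurable_condExp integrable_condExp
  have htower : μ[E13 | m1] =ᵐ[μ] E1 := condExp_condExp_of_le h1leXW hmXW
  have hsub : μ[D | mXZ] =ᵐ[μ] μ[G | mXZ] - μ[E13 | mXZ] := by
    have : D = G - E13 := rfl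
    rw [this]
    exact condExp_sub (hG2.integrable one_le_two) integrable_condExp mXZ
  have hDeq : μ[D | mXZ] =ᵐ[μ] fun ω => E12 ω - E1 ω := by
    filter_upwards [hsub, hdrop, htower] with ω h1 h2 h3
    simp only [Pi.sub_apply] at h1
    rw [h1, h2, h3]
  have step2 : ∫ ω, (E12 ω - E1 ω) ^ 2 ∂μ = ∫ ω, ((μ[D | mXZ]) ω) ^ 2 ∂μ :=
    integral_congr_ae (hDeq.mono fun ω hω => by simp only [hω])
  have step3 : ∫ ω, ((μ[D | mXZ]) ω) ^ 2 ∂μ ≤ ∫ ω, (D ω) ^ 2 ∂μ :=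
    integral_sq_condexp_le hmXZ hD2
  have step4 : variance G μ - variance E13 μ = ∫ ω, (D ω) ^ 2 ∂μ :=
    variance_sub_condexp hmXW hG2
  linarith
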